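/- arXiv:2505.02959 — 4 statements merged into one kernel-verified Lean document; each statement's English description precedes it below -/
import Mathlib

section
/- Let C : ℝ^d → ℝ be increasing, 1-invariant, convex, differentiable, and L-smooth with respect to a norm N. Fix q_0 ∈ ℝ^d and any finite trade history r_0, …, r_T ∈ ℝ^d with q_{t+1} = q_t + r_t. Then there exists an index i ∈ {1, …, d} such that ∑_{t=0}^{T} [⟨∇C(q_t), r_t⟩ + (L/2) N(r_t)²] ≥ (q_{T+1} − q_0)_i, i.e., the Smooth Quadratic Prediction Market satisfies no arbitrage over the whole trade history: there is an outcome under which the total payments collected are at least the total payout ∑_t (r_t)_i. -/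
/-!
Smoothness bounds each cost increment `C (q + r) - C q` by the payment for `r`, so the total
payment dominates `C q_{T+1} - C q_0` by telescoping. For an increasing, 1-invariant `C`,
comparing `y` with `x + α𝟙`, where `α` is the least coordinate of `y - x`, gives
`C y - C x ≥ α`, and `α` is the payout of some outcome.
-/

open scoped RealInnerProductSpace

noncomputable def allOnes (d : ℕ) : EuclideanSpace ℝ (Fin d) :=
  (EuclideanSpace.equiv (Fin d) ℝ).symm (fun _ => 1)

section CostFunction

variable {d : ℕ} {C : EuclideanSpace ℝ (Fin d) → ℝ}

theorem allOnes_apply (i : Fin d) : allOnes d i = 1 := rfl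

theorem nonempty_fin_of_add_smul_allOnes
    (hCinv : ∀ (q : EuclideanSpace ℝ (Fin d)) (α : ℝ), C (q + α • allOnes d) = C q + α) :
    Nonempty (Fin d) := by
  rw [← Fin.pos_iff_nonempty, Nat.pos_iff_ne_zero]
  rintro rfl
  have h := hCinv 0 1
  rw [Subsingleton.elim (0 + (1 : ℝ) • allOnes 0) 0] at h
  linarith

theorem le_of_forall_apply_le
    (hCincr : ∀ q q' : EuclideanSpace ℝ (Fin d), (∀ i, q' i ≤ q i) → q ≠ q' → C q' < C q)
    {q q' : EuclideanSpace ℝ (Fin d)} (h : ∀ i, q' i ≤ q i) : C q' ≤ C q := by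
  rcases eq_or_ne q q' with rfl | hne
  · rfl
  · exact (hCincr q q' h hne).le

theorem add_le_of_forall_le_sub_apply
    (hCincr : ∀ q q' : EuclideanSpace ℝ (Fin d), (∀ i, q' i ≤ q i) → q ≠ q' → C q' < C q)
    (hCinv : ∀ (q : EuclideanSpace ℝ (Fin d)) (α : ℝ), C (q + α • allOnes d) = C q + α)
    {x y : EuclideanSpace ℝ (Fin d)} {α : ℝ} (h : ∀ i, α ≤ y i - x i) : C x + α ≤ C y := by
  rw [← hCinv]
  refine le_of_forall_apply_le hCincr fun i => ?_
  simp only [PiLp.add_apply, PiLp.smul_apply, allOnes_apply, smul_eq_mul, mul_one]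
  linarith [h i]

theorem exists_sub_apply_le_sub
    (hCincr : ∀ q q' : EuclideanSpace ℝ (Fin d), (∀ i, q' i ≤ q i) → q ≠ q' → C q' < C q)
    (hCinv : ∀ (q : EuclideanSpace ℝ (Fin d)) (α : ℝ), C (q + α • allOnes d) = C q + α)
    (x y : EuclideanSpace ℝ (Fin d)) : ∃ i, (y - x) i ≤ C y - C x := by
  have := nonempty_fin_of_add_smul_allOnes hCinv
  obtain ⟨i, -, hi⟩ :=
    Finset.exists_min_image Finset.univ (fun j => (y - x) j) Finset.univ_nonempty
  have hle := add_le_of_forall_le_sub_apply hCincr hCinv (x := x) (y := y) (α := (y - x) i)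
    fun j => by simpa using hi j (Finset.mem_univ j)
  exact ⟨i, by linarith⟩

theorem sub_le_inner_gradient_add_sq {N : EuclideanSpace ℝ (Fin d) → ℝ} {L : ℝ}
    (hCsmooth : ∀ x y : EuclideanSpace ℝ (Fin d),
      C x - C y - ⟪gradient C y, x - y⟫ ≤ L / 2 * N (x - y) ^ 2)
    (q r : EuclideanSpace ℝ (Fin d)) :
    C (q + r) - C q ≤ ⟪gradient C q, r⟫ + L / 2 * N r ^ 2 := by
  have h := hCsmooth (q + r) q
  rw [add_sub_cancel_left] at h
  linarith

end CostFunction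

theorem smooth_quadratic_no_arbitrage_history_general
    (d : ℕ) (C : EuclideanSpace ℝ (Fin d) → ℝ)
    (hCincr : ∀ q q' : EuclideanSpace ℝ (Fin d),
      (∀ i, q' i ≤ q i) → q ≠ q' → C q' < C q)
    (hCinv : ∀ (q : EuclideanSpace ℝ (Fin d)) (α : ℝ), C (q + α • allOnes d) = C q + α)
    (N : EuclideanSpace ℝ (Fin d) → ℝ)
    (L : ℝ)
    (hCsmooth : ∀ x y : EuclideanSpace ℝ (Fin d),
      C x - C y - ⟪gradient C y, x - y⟫ ≤ L / 2 * N (x - y) ^ 2)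
    (T : ℕ) (r : ℕ → EuclideanSpace ℝ (Fin d))
    (q : ℕ → EuclideanSpace ℝ (Fin d))
    (hq : ∀ t, q (t + 1) = q t + r t) :
    ∃ i : Fin d,
      ∑ t ∈ Finset.range (T + 1), (⟪gradient C (q t), r t⟫ + L / 2 * N (r t) ^ 2) ≥
        (q (T + 1) - q 0) i := by
  obtain ⟨i, hi⟩ := exists_sub_apply_le_sub hCincr hCinv (q 0) (q (T + 1))
  refine ⟨i, hi.trans ?_⟩
  rw [← Finset.sum_range_sub fun t => C (q t)]
  gcongr with t
  rw [hq t]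
  exact sub_le_inner_gradient_add_sq hCsmooth (q t) (r t)

/-- the Smooth Quadratic Prediction Market satisfies no arbitrage over a
whole trade history: there is an outcome `i` with
`∑_{t=0}^{T} [⟪∇C(q_t), r_t⟫ + (L/2) N(r_t)²] ≥ (q_{T+1} − q_0)_i`. -/
theorem smooth_quadratic_no_arbitrage_history
    (d : ℕ) (C : EuclideanSpace ℝ (Fin d) → ℝ)
    (hCincr : ∀ q q' : EuclideanSpace ℝ (Fin d),
      (∀ i, q' i ≤ q i) → q ≠ q' → C q' < C q)
    (hCinv : ∀ (q : EuclideanSpace ℝ (Fin d)) (α : ℝ), C (q + α • allOnes d) = C q + α)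
    (hCconv : ConvexOn ℝ Set.univ C)
    (hCdiff : Differentiable ℝ C)
    (N : EuclideanSpace ℝ (Fin d) → ℝ)
    (hN_nonneg : ∀ x, 0 ≤ N x)
    (hN_eq_zero : ∀ x, N x = 0 ↔ x = 0)
    (hN_smul : ∀ (a : ℝ) x, N (a • x) = |a| * N x)
    (hN_add : ∀ x y, N (x + y) ≤ N x + N y)
    (L : ℝ) (hL : 0 ≤ L)
    (hCsmooth : ∀ x y : EuclideanSpace ℝ (Fin d),
      C x - C y - ⟪gradient C y, x - y⟫ ≤ L / 2 * N (x - y) ^ 2)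
    (T : ℕ) (r : ℕ → EuclideanSpace ℝ (Fin d))
    (q : ℕ → EuclideanSpace ℝ (Fin d))
    (hq : ∀ t, q (t + 1) = q t + r t) :
    ∃ i : Fin d,
      ∑ t ∈ Finset.range (T + 1), (⟪gradient C (q t), r t⟫ + L / 2 * N (r t) ^ 2) ≥
        (q (T + 1) - q 0) i :=
  smooth_quadratic_no_arbitrage_history_general d C hCincr hCinv N L hCsmooth T r q hq
end

section
/- Let C : ℝ^d → ℝ be convex and differentiable, let μ ∈ ℝ^d, q ∈ ℝ^d, and L > 0. Then the function r ↦ ⟨∇C(q) − μ, r⟩ + (L/2)‖r‖₂² on ℝ^d has the unique minimizer r* = −(1/L)(∇C(q) − μ). Hence in the ℓ₂-based Smooth Quadratic Prediction Market, an expectation-maximizing trader with belief μ at state q moves the state to q − (1/L)(∇C(q) − μ), which is exactly one gradient-descent step with stepsize 1/L on the function C̄(x) = C(x) − ⟨μ, x⟩. -/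
/-! Completing the square, `⟪g, r⟫ + L/2 ‖r‖² = L/2 ‖r + L⁻¹ • g‖² - ‖g‖²/(2L)`, shows that for `L > 0`
the minimum is attained exactly where the square vanishes, at `r = -L⁻¹ • g`. With
`g = ∇C(q) - μ = ∇(C - ⟪μ, ·⟫)(q)` the optimal move is a gradient step with stepsize `1/L`. -/

open scoped RealInnerProductSpace

section
variable {E : Type*} [NormedAddCommGroup E] [InnerProductSpace ℝ E]

theorem inner_add_half_mul_norm_sq_eq {L : ℝ} (hL : L ≠ 0) (g r : E) :
    ⟪g, r⟫ + L / 2 * ‖r‖ ^ 2 = L / 2 * ‖r + L⁻¹ • g‖ ^ 2 - ‖g‖ ^ 2 / (2 * L) := by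
  rw [norm_add_sq_real, real_inner_smul_right, norm_smul, real_inner_comm, Real.norm_eq_abs,
    mul_pow, sq_abs]
  field_simp
  ring

theorem inner_add_half_mul_norm_sq_neg_inv_smul {L : ℝ} (hL : L ≠ 0) (g : E) :
    ⟪g, -(L⁻¹ • g)⟫ + L / 2 * ‖-(L⁻¹ • g)‖ ^ 2 = -(‖g‖ ^ 2 / (2 * L)) := by
  rw [inner_add_half_mul_norm_sq_eq hL, neg_add_cancel, norm_zero]
  ring

theorem inner_add_half_mul_norm_sq_neg_inv_smul_le {L : ℝ} (hL : 0 < L) (g r : E) :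
    ⟪g, -(L⁻¹ • g)⟫ + L / 2 * ‖-(L⁻¹ • g)‖ ^ 2 ≤ ⟪g, r⟫ + L / 2 * ‖r‖ ^ 2 := by
  rw [inner_add_half_mul_norm_sq_neg_inv_smul hL.ne', inner_add_half_mul_norm_sq_eq hL.ne']
  have : 0 ≤ L / 2 * ‖r + L⁻¹ • g‖ ^ 2 := by positivity
  linarith

theorem eq_neg_inv_smul_of_inner_add_half_mul_norm_sq_le {L : ℝ} (hL : 0 < L) {g r : E}
    (h : ⟪g, r⟫ + L / 2 * ‖r‖ ^ 2 ≤ ⟪g, -(L⁻¹ • g)⟫ + L / 2 * ‖-(L⁻¹ • g)‖ ^ 2) :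
    r = -(L⁻¹ • g) := by
  rw [inner_add_half_mul_norm_sq_neg_inv_smul hL.ne', inner_add_half_mul_norm_sq_eq hL.ne'] at h
  have hsq : ‖r + L⁻¹ • g‖ ^ 2 ≤ 0 := by nlinarith
  have hzero : r + L⁻¹ • g = 0 := by
    simpa using le_antisymm hsq (sq_nonneg _)
  exact eq_neg_of_add_eq_zero_left hzero

theorem HasGradientAt.sub_inner [CompleteSpace E] {C : E → ℝ} {g q : E}
    (hC : HasGradientAt C g q) (μ : E) :
    HasGradientAt (fun x => C x - ⟪μ, x⟫) (g - μ) q := by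
  rw [hasGradientAt_iff_hasFDerivAt, map_sub]
  exact hC.hasFDerivAt.sub (InnerProductSpace.toDual ℝ E μ).hasFDerivAt

end

theorem smooth_quadratic_l2_unique_minimizer_is_gradient_step_general
    (d : ℕ) (C : EuclideanSpace ℝ (Fin d) → ℝ)
    (hCdiff : Differentiable ℝ C)
    (μ q : EuclideanSpace ℝ (Fin d)) (L : ℝ) (hL : 0 < L)
    (rstar : EuclideanSpace ℝ (Fin d))
    (hrstar : rstar = -(L⁻¹ • (gradient C q - μ))) :
    (∀ r : EuclideanSpace ℝ (Fin d),
        ⟪gradient C q - μ, rstar⟫ + L / 2 * ‖rstar‖ ^ 2 ≤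
          ⟪gradient C q - μ, r⟫ + L / 2 * ‖r‖ ^ 2) ∧
      (∀ r : EuclideanSpace ℝ (Fin d),
        (∀ r' : EuclideanSpace ℝ (Fin d),
          ⟪gradient C q - μ, r⟫ + L / 2 * ‖r‖ ^ 2 ≤
            ⟪gradient C q - μ, r'⟫ + L / 2 * ‖r'‖ ^ 2) → r = rstar) ∧
      q + rstar = q - L⁻¹ • gradient (fun x => C x - ⟪μ, x⟫) q := by
  subst hrstar
  refine ⟨inner_add_half_mul_norm_sq_neg_inv_smul_le hL _,
    fun r hr => eq_neg_inv_smul_of_inner_add_half_mul_norm_sq_le hL (hr _), ?_⟩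
  rw [((hCdiff q).hasGradientAt.sub_inner μ).gradient]
  exact (sub_eq_add_neg _ _).symm

/-- in the ℓ₂-based Smooth Quadratic Prediction Market, the function
`r ↦ ⟪∇C(q) − μ, r⟫ + (L/2)‖r‖₂²` has the unique minimizer
`r* = −(1/L)(∇C(q) − μ)`; hence the trader moves the state to
`q − (1/L)(∇C(q) − μ)`, one gradient-descent step with stepsize `1/L` on
`C̄(x) = C(x) − ⟪μ, x⟫`. -/
theorem smooth_quadratic_l2_unique_minimizer_is_gradient_step
    (d : ℕ) (C : EuclideanSpace ℝ (Fin d) → ℝ)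
    (hCconv : ConvexOn ℝ Set.univ C)
    (hCdiff : Differentiable ℝ C)
    (μ q : EuclideanSpace ℝ (Fin d)) (L : ℝ) (hL : 0 < L)
    (rstar : EuclideanSpace ℝ (Fin d))
    (hrstar : rstar = -(L⁻¹ • (gradient C q - μ))) :
    (∀ r : EuclideanSpace ℝ (Fin d),
        ⟪gradient C q - μ, rstar⟫ + L / 2 * ‖rstar‖ ^ 2 ≤
          ⟪gradient C q - μ, r⟫ + L / 2 * ‖r‖ ^ 2) ∧
      (∀ r : EuclideanSpace ℝ (Fin d),
        (∀ r' : EuclideanSpace ℝ (Fin d),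
          ⟪gradient C q - μ, r⟫ + L / 2 * ‖r‖ ^ 2 ≤
            ⟪gradient C q - μ, r'⟫ + L / 2 * ‖r'‖ ^ 2) → r = rstar) ∧
      q + rstar = q - L⁻¹ • gradient (fun x => C x - ⟪μ, x⟫) q :=
  smooth_quadratic_l2_unique_minimizer_is_gradient_step_general d C hCdiff μ q L hL rstar hrstar
end

section
/- Let N₁, N₂ : ℝ^d → ℝ be norms. Let f : ℝ^d → ℝ be differentiable, μ-strongly convex with respect to N₁, and convex and L-smooth with respect to N₂, with μ, L > 0. Let x* be a global minimizer of f, fix x ∈ ℝ^d, and let y* be a minimizer of y ↦ f(x) + ⟨∇f(x), y − x⟩ + (L/2) N₂(y − x)² over ℝ^d. Then N₁(y* − x*)² ≤ (L/μ) N₂(x − x*)². -/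
open scoped RealInnerProductSpace

/-!
Strong convexity at the minimizer `x⋆`, where the gradient vanishes, gives
`μ/2 · N₁(y⋆ - x⋆)² ≤ f y⋆ - f x⋆`. On the other side, smoothness bounds `f y⋆` by the value of
the quadratic model at `y⋆`, which by the choice of `y⋆` is at most its value at `x⋆`; convexity
bounds the linear part of that model by `f x⋆`, leaving `f y⋆ - f x⋆ ≤ L/2 · N₂(x⋆ - x)²`.
-/

section

variable {E : Type*} [NormedAddCommGroup E] [InnerProductSpace ℝ E] [CompleteSpace E]
  {f N : E → ℝ}

theorem IsLocalMin.gradient_eq_zero {a : E} (h : IsLocalMin f a) : gradient f a = 0 := by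
  rw [gradient, h.fderiv_eq_zero, map_zero]

theorem add_inner_gradient_le_of_strongConvex {μ : ℝ} (hμ : 0 ≤ μ)
    (hstrong : ∀ x y, μ / 2 * N (x - y) ^ 2 ≤ f x - f y - ⟪gradient f y, x - y⟫) (x y : E) :
    f x + ⟪gradient f x, y - x⟫ ≤ f y := by
  have := hstrong y x
  have : 0 ≤ μ / 2 * N (y - x) ^ 2 := by positivity
  linarith

theorem half_mul_sq_le_sub_of_isLocalMin {μ : ℝ} {a : E}
    (hstrong : ∀ x y, μ / 2 * N (x - y) ^ 2 ≤ f x - f y - ⟪gradient f y, x - y⟫)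
    (hmin : IsLocalMin f a) (y : E) :
    μ / 2 * N (y - a) ^ 2 ≤ f y - f a := by
  simpa [hmin.gradient_eq_zero] using hstrong y a

theorem le_add_half_mul_sq_of_isMin_quadraticModel {L : ℝ} {x ystar : E}
    (hconv : ∀ y, f x + ⟪gradient f x, y - x⟫ ≤ f y)
    (hsmooth : ∀ x y, f x - f y - ⟪gradient f y, x - y⟫ ≤ L / 2 * N (x - y) ^ 2)
    (hystar : ∀ y, f x + ⟪gradient f x, ystar - x⟫ + L / 2 * N (ystar - x) ^ 2 ≤
      f x + ⟪gradient f x, y - x⟫ + L / 2 * N (y - x) ^ 2) (y : E) :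
    f ystar ≤ f y + L / 2 * N (y - x) ^ 2 := by
  linarith [hsmooth ystar x, hystar y, hconv y]

end

theorem steepest_descent_step_distance_bound_general
    (d : ℕ) (N₁ N₂ : EuclideanSpace ℝ (Fin d) → ℝ)
    (hN₂_smul : ∀ (a : ℝ) x, N₂ (a • x) = |a| * N₂ x)
    (f : EuclideanSpace ℝ (Fin d) → ℝ)
    (μ L : ℝ) (hμ : 0 < μ)
    (hfstrong : ∀ x y : EuclideanSpace ℝ (Fin d),
      μ / 2 * N₁ (x - y) ^ 2 ≤ f x - f y - ⟪gradient f y, x - y⟫)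
    (hfsmooth : ∀ x y : EuclideanSpace ℝ (Fin d),
      f x - f y - ⟪gradient f y, x - y⟫ ≤ L / 2 * N₂ (x - y) ^ 2)
    (xstar : EuclideanSpace ℝ (Fin d)) (hxstar : ∀ y, f xstar ≤ f y)
    (x ystar : EuclideanSpace ℝ (Fin d))
    (hystar : ∀ y : EuclideanSpace ℝ (Fin d),
      f x + ⟪gradient f x, ystar - x⟫ + L / 2 * N₂ (ystar - x) ^ 2 ≤
        f x + ⟪gradient f x, y - x⟫ + L / 2 * N₂ (y - x) ^ 2) :
    N₁ (ystar - xstar) ^ 2 ≤ L / μ * N₂ (x - xstar) ^ 2 := by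
  have hgrowth := half_mul_sq_le_sub_of_isLocalMin hfstrong
    (Filter.Eventually.of_forall hxstar : IsLocalMin f xstar) ystar
  have hstep := le_add_half_mul_sq_of_isMin_quadraticModel
    (add_inner_gradient_le_of_strongConvex hμ.le hfstrong x) hfsmooth hystar xstar
  have hsymm : N₂ (xstar - x) = N₂ (x - xstar) := by
    simpa using hN₂_smul (-1) (x - xstar)
  rw [hsymm] at hstep
  rw [div_mul_eq_mul_div, le_div_iff₀ hμ]
  linarith

/-- for `f` that is `μ`-strongly convex w.r.t. `N₁` and convex and
`L`-smooth w.r.t. `N₂`, with global minimizer `x*`, and `y*` the steepest descent step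
from `x` w.r.t. `N₂`, we have `N₁(y* − x*)² ≤ (L/μ) N₂(x − x*)²`. -/
theorem steepest_descent_step_distance_bound
    (d : ℕ) (N₁ N₂ : EuclideanSpace ℝ (Fin d) → ℝ)
    (hN₁_nonneg : ∀ x, 0 ≤ N₁ x)
    (hN₁_eq_zero : ∀ x, N₁ x = 0 ↔ x = 0)
    (hN₁_smul : ∀ (a : ℝ) x, N₁ (a • x) = |a| * N₁ x)
    (hN₁_add : ∀ x y, N₁ (x + y) ≤ N₁ x + N₁ y)
    (hN₂_nonneg : ∀ x, 0 ≤ N₂ x)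
    (hN₂_eq_zero : ∀ x, N₂ x = 0 ↔ x = 0)
    (hN₂_smul : ∀ (a : ℝ) x, N₂ (a • x) = |a| * N₂ x)
    (hN₂_add : ∀ x y, N₂ (x + y) ≤ N₂ x + N₂ y)
    (f : EuclideanSpace ℝ (Fin d) → ℝ)
    (hfconv : ConvexOn ℝ Set.univ f)
    (hfdiff : Differentiable ℝ f)
    (μ L : ℝ) (hμ : 0 < μ) (hL : 0 < L)
    (hfstrong : ∀ x y : EuclideanSpace ℝ (Fin d),
      μ / 2 * N₁ (x - y) ^ 2 ≤ f x - f y - ⟪gradient f y, x - y⟫)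
    (hfsmooth : ∀ x y : EuclideanSpace ℝ (Fin d),
      f x - f y - ⟪gradient f y, x - y⟫ ≤ L / 2 * N₂ (x - y) ^ 2)
    (xstar : EuclideanSpace ℝ (Fin d)) (hxstar : ∀ y, f xstar ≤ f y)
    (x ystar : EuclideanSpace ℝ (Fin d))
    (hystar : ∀ y : EuclideanSpace ℝ (Fin d),
      f x + ⟪gradient f x, ystar - x⟫ + L / 2 * N₂ (ystar - x) ^ 2 ≤
        f x + ⟪gradient f x, y - x⟫ + L / 2 * N₂ (y - x) ^ 2) :
    N₁ (ystar - xstar) ^ 2 ≤ L / μ * N₂ (x - xstar) ^ 2 :=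
  steepest_descent_step_distance_bound_general d N₁ N₂ hN₂_smul f μ L hμ hfstrong hfsmooth xstar
    hxstar x ystar hystar
end

section
/- Let d ≥ 1 and let R : Δ_d → ℝ be continuous. Define C(q) = max_{p ∈ Δ_d} (⟨q, p⟩ − R(p)) for q ∈ ℝ^d. Then for every q ∈ ℝ^d, max_{1 ≤ i ≤ d} q_i − (C(q) − C(0)) ≤ max_{1 ≤ i ≤ d} R(e_i) − min_{p ∈ Δ_d} R(p). That is, the worst-case loss of the Duality-based Cost Function Market Maker started at state 0 is at most R_max − R_min, where R_max is the maximum of R over the vertices of the simplex and R_min is its minimum over the simplex. -/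
/-!
Testing the supremum defining `C q` at a vertex `e_i` gives `q_i - R(e_i) ≤ C q`, hence
`max_i q_i ≤ C q + max_i R(e_i)`; at `q = 0` the supremum is `sup (-R) = -min R`.
-/

open scoped RealInnerProductSpace

/-- The probability simplex `Δ_d ⊆ ℝ^d`. -/
def probSimplex (d : ℕ) : Set (EuclideanSpace ℝ (Fin d)) :=
  {p | (∀ i, 0 ≤ p i) ∧ ∑ i, p i = 1}

lemma isCompact_probSimplex (d : ℕ) : IsCompact (probSimplex d) :=
  (EuclideanSpace.equiv (Fin d) ℝ).toHomeomorph.isCompact_preimage.2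
    (isCompact_stdSimplex ℝ (Fin d))

lemma single_one_mem_probSimplex {d : ℕ} (i : Fin d) :
    EuclideanSpace.single i (1 : ℝ) ∈ probSimplex d :=
  ⟨fun j => by simp only [PiLp.single_apply]; positivity, by simp⟩

section ConvexConjugate

variable {E : Type*} [NormedAddCommGroup E] [InnerProductSpace ℝ E]

noncomputable def convexConjugateOn (S : Set E) (R : E → ℝ) (q : E) : ℝ :=
  sSup ((fun p => ⟪q, p⟫ - R p) '' S)

variable {S : Set E} {R : E → ℝ}

lemma inner_sub_le_convexConjugateOn (hS : IsCompact S) (hR : ContinuousOn R S) (q : E) {p : E}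
    (hp : p ∈ S) : ⟪q, p⟫ - R p ≤ convexConjugateOn S R q :=
  le_csSup (hS.image_of_continuousOn
      ((continuous_const.inner continuous_id).continuousOn.sub hR)).bddAbove
    (Set.mem_image_of_mem _ hp)

lemma convexConjugateOn_zero (S : Set E) (R : E → ℝ) :
    convexConjugateOn S R 0 = -sInf (R '' S) := by
  rw [convexConjugateOn, ← Real.sSup_neg, ← Set.image_neg_eq_neg, Set.image_image]
  simp only [inner_zero_left, zero_sub]

end ConvexConjugate

/-- the worst-case loss of the DCFMM with cost
`C(q) = max_{p ∈ Δ_d} (⟪q, p⟫ − R(p))`, started at state `0`, is at most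
`R_max − R_min`: for every `q`,
`max_i q_i − (C(q) − C(0)) ≤ max_i R(e_i) − min_{p ∈ Δ_d} R(p)`. -/
theorem dcfmm_worst_case_loss_bound
    (d : ℕ) (hd : 1 ≤ d)
    (R : EuclideanSpace ℝ (Fin d) → ℝ)
    (hR : ContinuousOn R (probSimplex d))
    (C : EuclideanSpace ℝ (Fin d) → ℝ)
    (hC : ∀ q, C q = sSup ((fun p => ⟪q, p⟫ - R p) '' probSimplex d)) :
    ∀ q : EuclideanSpace ℝ (Fin d),
      (⨆ i : Fin d, q i) - (C q - C 0) ≤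
        (⨆ i : Fin d, R (EuclideanSpace.single i (1 : ℝ))) -
          sInf (R '' probSimplex d) := by
  obtain rfl : C = convexConjugateOn (probSimplex d) R := funext hC
  intro q
  have : Nonempty (Fin d) := Fin.pos_iff_nonempty.mp hd
  have hvertex (i : Fin d) :
      q i ≤ convexConjugateOn (probSimplex d) R q + R (EuclideanSpace.single i 1) := by
    have := inner_sub_le_convexConjugateOn (isCompact_probSimplex d) hR q
      (single_one_mem_probSimplex i)
    rw [EuclideanSpace.inner_single_right, one_mul, conj_trivial] at this
    linarith
  have hmax : ⨆ i, q i ≤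
      convexConjugateOn (probSimplex d) R q + ⨆ i, R (EuclideanSpace.single i (1 : ℝ)) :=
    ciSup_le fun i => (hvertex i).trans <|
      add_le_add_right (le_ciSup (f := fun j => R (EuclideanSpace.single j (1 : ℝ)))
        (Set.finite_range _).bddAbove i) _
  rw [convexConjugateOn_zero]
  linarith
end
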